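/- The trace of the square of the torsion matrix is Tr(B₀ * B₀) = (3/32) · Tr(1) · ∑_{i,j,k : Fin n} T_{ijk}², where Tr(1) is the trace of the N×N identity matrix. -/

import Mathlib

/-!
Write the torsion term as `S = ∑ T_{jkl} γ_j γ_k γ_l = ∑_m γ_m U_m` with the bivectors
`U_m = ∑ T_{mkl} γ_k γ_l`. Total antisymmetry of `T` gives `γ_m S + S γ_m = 6 U_m` and
`γ_m U_m = U_m γ_m`, so cyclicity of the trace yields `Tr(γ_m U_m S) = 3 Tr(U_m²)`, while the
four-gamma trace identity gives `Tr(U_m²) = -2 Tr(1) ∑_{kl} T_{mkl}²`. Hence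
`Tr(S²) = -6 Tr(1) ∑ T²`, and the prefactor `(-i/8)² = -1/64` turns this into `3/32`.
-/

open Matrix BigOperators

section Clifford

variable {𝕜 A ι : Type*} [CommRing 𝕜] [Ring A] [Algebra 𝕜 A]

variable (𝕜) in
def IsCliffordFamily [DecidableEq ι] (γ : ι → A) : Prop :=
  ∀ a b, γ a * γ b + γ b * γ a = (2 * if a = b then (1 : 𝕜) else 0) • (1 : A)

theorem clifford_mul_mul_eq [DecidableEq ι] {γ : ι → A} (hγ : IsCliffordFamily 𝕜 γ)
    (m k l : ι) :
    γ m * (γ k * γ l) = γ k * γ l * γ m + (2 * if m = k then (1 : 𝕜) else 0) • γ l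
      - (2 * if m = l then (1 : 𝕜) else 0) • γ k := by
  rw [← mul_assoc, eq_sub_of_add_eq (hγ m k), sub_mul, mul_assoc, eq_sub_of_add_eq (hγ m l)]
  simp only [smul_mul_assoc, one_mul, mul_sub, mul_smul_comm, mul_one, mul_assoc]
  abel

theorem clifford_anticomm_mul_mul_mul [DecidableEq ι] {γ : ι → A}
    (hγ : IsCliffordFamily 𝕜 γ)
    (m j k l : ι) :
    γ m * (γ j * γ k * γ l) + γ j * γ k * γ l * γ m
      = (2 * if m = j then (1 : 𝕜) else 0) • (γ k * γ l)
        - (2 * if m = k then (1 : 𝕜) else 0) • (γ j * γ l)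
        + (2 * if m = l then (1 : 𝕜) else 0) • (γ j * γ k) := by
  rw [mul_assoc (γ j), ← mul_assoc, eq_sub_of_add_eq (hγ m j), sub_mul, mul_assoc,
    clifford_mul_mul_eq hγ]
  simp only [smul_mul_assoc, one_mul, mul_sub, mul_add, mul_smul_comm, mul_assoc]
  abel

variable [Fintype ι]

def bivector (γ : ι → A) (t : ι → ι → 𝕜) : A :=
  ∑ k, ∑ l, t k l • (γ k * γ l)

def trivector (γ : ι → A) (T : ι → ι → ι → 𝕜) : A :=
  ∑ j, ∑ k, ∑ l, T j k l • (γ j * γ k * γ l)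

theorem trivector_eq_sum_mul_bivector (γ : ι → A) (T : ι → ι → ι → 𝕜) :
    trivector γ T = ∑ j, γ j * bivector γ (T j) := by
  simp only [trivector, bivector, Finset.mul_sum, mul_smul_comm, mul_assoc]

theorem commute_bivector [DecidableEq ι] {γ : ι → A} (hγ : IsCliffordFamily 𝕜 γ)
    {t : ι → ι → 𝕜} {m : ι} (hl : ∀ l, t m l = 0) (hr : ∀ k, t k m = 0) :
    Commute (γ m) (bivector γ t) := by
  simp only [Commute, SemiconjBy, bivector, Finset.mul_sum, Finset.sum_mul, mul_smul_comm,
    smul_mul_assoc, clifford_mul_mul_eq hγ, smul_add, smul_sub, smul_smul, Finset.sum_add_distrib,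
    Finset.sum_sub_distrib, mul_ite, mul_zero, mul_one, ite_smul, zero_smul, smul_ite, smul_zero,
    Finset.sum_ite_eq, Finset.sum_ite_irrel, Finset.mem_univ, if_true, Finset.sum_const_zero, hl,
    hr, zero_mul, add_zero, sub_zero]

theorem mul_trivector_add_trivector_mul [DecidableEq ι] {γ : ι → A}
    (hγ : IsCliffordFamily 𝕜 γ)
    {T : ι → ι → ι → 𝕜} (hT1 : ∀ j k l, T j k l = -T k j l)
    (hT2 : ∀ j k l, T j k l = -T j l k) (m : ι) :
    γ m * trivector γ T + trivector γ T * γ m = (6 : 𝕜) • bivector γ (T m) := by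
  simp only [trivector, Finset.mul_sum, Finset.sum_mul, mul_smul_comm, smul_mul_assoc,
    ← Finset.sum_add_distrib, ← smul_add, clifford_anticomm_mul_mul_mul hγ]
  simp only [smul_add, smul_sub, smul_smul, Finset.sum_add_distrib, Finset.sum_sub_distrib,
    mul_ite, mul_zero, mul_one, ite_smul, zero_smul, smul_ite, smul_zero, Finset.sum_ite_eq,
    Finset.sum_ite_irrel, Finset.mem_univ, if_true, Finset.sum_const_zero]
  have hT1' : ∀ j l, T j m l = -T m j l := fun j l => hT1 j m l
  have hT2' : ∀ j k, T j k m = T m j k := fun j k => by rw [hT2, hT1, neg_neg]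
  simp only [hT1', hT2', bivector, Finset.smul_sum, ← Finset.sum_sub_distrib,
    ← Finset.sum_add_distrib]
  refine Finset.sum_congr rfl fun j _ => Finset.sum_congr rfl fun k _ => ?_
  module

end Clifford

section Trace

variable {𝕜 ι d : Type*} [Fintype d]

theorem trace_mul_mul_of_commute_of_anticomm {R : Type*} [CommRing R]
    {g U S : Matrix d d R} {c : R} (hgU : Commute g U) (hS : g * S + S * g = c • U) :
    2 * trace (g * U * S) = c * trace (U * U) := by
  have h := trace_mul_comm g (U * S)
  rw [mul_assoc U, eq_sub_of_add_eq' hS, mul_sub, mul_smul_comm, ← mul_assoc U g, ← hgU.eq,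
    trace_sub, trace_smul, smul_eq_mul, ← mul_assoc] at h
  linear_combination h

variable [DecidableEq d] [Field 𝕜] [CharZero 𝕜] [DecidableEq ι]

theorem trace_clifford_mul {γ : ι → Matrix d d 𝕜} (hγ : IsCliffordFamily 𝕜 γ)
    (a b : ι) :
    trace (γ a * γ b) = (if a = b then 1 else 0) * trace (1 : Matrix d d 𝕜) := by
  have h := congrArg trace (hγ a b)
  rw [trace_add, trace_smul, smul_eq_mul, trace_mul_comm (γ b)] at h
  linear_combination h / 2

theorem trace_clifford_mul_mul_mul {γ : ι → Matrix d d 𝕜} (hγ : IsCliffordFamily 𝕜 γ)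
    (a b c e : ι) :
    trace (γ a * (γ b * (γ c * γ e)))
      = ((if a = b then 1 else 0) * (if c = e then 1 else 0)
        - (if a = c then 1 else 0) * (if b = e then 1 else 0)
        + (if a = e then 1 else 0) * (if b = c then 1 else 0)) * trace (1 : Matrix d d 𝕜) := by
  have e1 := congrArg (fun M => trace (M * (γ c * γ e))) (hγ a b)
  have e2 := congrArg (fun M => trace (γ b * M * γ e)) (hγ a c)
  have e3 := congrArg (fun M => trace (γ b * γ c * M)) (hγ a e)
  have e4 := trace_mul_comm (γ a) (γ b * γ c * γ e)
  simp only [add_mul, mul_add, smul_mul_assoc, mul_smul_comm, one_mul, mul_one,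
    trace_add, trace_smul, smul_eq_mul, mul_assoc] at e1 e2 e3 e4
  linear_combination (e1 - e2 + e3 + e4) / 2
    + (if a = b then (1 : 𝕜) else 0) * trace_clifford_mul hγ c e
    - (if a = c then (1 : 𝕜) else 0) * trace_clifford_mul hγ b e
    + (if a = e then (1 : 𝕜) else 0) * trace_clifford_mul hγ b c

variable [Fintype ι]

theorem trace_bivector_mul_self {γ : ι → Matrix d d 𝕜} (hγ : IsCliffordFamily 𝕜 γ)
    {t : ι → ι → 𝕜} (ht : ∀ k l, t k l = -t l k) :
    trace (bivector γ t * bivector γ t)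
      = -2 * trace (1 : Matrix d d 𝕜) * ∑ k, ∑ l, t k l ^ 2 := by
  have hdiag : ∀ k, t k k = 0 := fun k => CharZero.eq_neg_self_iff.mp (ht k k)
  simp only [bivector, Finset.sum_mul, Finset.mul_sum, trace_sum, smul_mul_assoc,
    mul_smul_comm, trace_smul, smul_eq_mul, mul_assoc, trace_clifford_mul_mul_mul hγ]
  simp only [mul_add, mul_sub, add_mul, sub_mul, mul_ite, ite_mul, mul_one, one_mul, mul_zero,
    zero_mul, Finset.sum_add_distrib, Finset.sum_sub_distrib, Finset.sum_ite_eq,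
    Finset.sum_ite_eq', Finset.sum_ite_irrel, Finset.mem_univ, if_true, Finset.sum_const_zero,
    hdiag]
  rw [zero_sub, ← Finset.sum_neg_distrib, ← Finset.sum_add_distrib]
  refine Finset.sum_congr rfl fun k _ => ?_
  rw [← Finset.sum_neg_distrib, ← Finset.sum_add_distrib]
  refine Finset.sum_congr rfl fun l _ => ?_
  rw [ht l k]
  ring

theorem trace_trivector_mul_self {γ : ι → Matrix d d 𝕜} (hγ : IsCliffordFamily 𝕜 γ)
    {T : ι → ι → ι → 𝕜} (hT1 : ∀ j k l, T j k l = -T k j l)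
    (hT2 : ∀ j k l, T j k l = -T j l k) :
    trace (trivector γ T * trivector γ T)
      = -6 * trace (1 : Matrix d d 𝕜) * ∑ i, ∑ j, ∑ k, T i j k ^ 2 := by
  have hterm : ∀ m, trace (γ m * bivector γ (T m) * trivector γ T)
      = -6 * trace (1 : Matrix d d 𝕜) * ∑ k, ∑ l, T m k l ^ 2 := by
    intro m
    have hl : ∀ l, T m m l = 0 := fun l => CharZero.eq_neg_self_iff.mp (hT1 m m l)
    have hr : ∀ k, T m k m = 0 := fun k => by rw [hT2, hl, neg_zero]
    have h := trace_mul_mul_of_commute_of_anticomm (commute_bivector hγ hl hr)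
      (mul_trivector_add_trivector_mul hγ hT1 hT2 m)
    rw [trace_bivector_mul_self hγ (hT2 m)] at h
    linear_combination h / 2
  nth_rewrite 1 [trivector_eq_sum_mul_bivector]
  rw [Finset.sum_mul, trace_sum, Finset.mul_sum]
  exact Finset.sum_congr rfl fun m _ => hterm m

end Trace

theorem stmt_14_general (n N : ℕ)
    (γ : Fin n → Matrix (Fin N) (Fin N) ℂ)
    (hγ : ∀ a b : Fin n, γ a * γ b + γ b * γ a
      = (2 * if a = b then (1:ℂ) else 0) • (1 : Matrix (Fin N) (Fin N) ℂ))
    (T : Fin n → Fin n → Fin n → ℝ)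
    (hT1 : ∀ j k l : Fin n, T j k l = - T k j l)
    (hT2 : ∀ j k l : Fin n, T j k l = - T j l k)
    (B₀ : Matrix (Fin N) (Fin N) ℂ)
    (hB : B₀ = (-(Complex.I / 8)) •
      ∑ j : Fin n, ∑ k : Fin n, ∑ l : Fin n, ((T j k l : ℂ)) • (γ j * γ k * γ l)) :
    Matrix.trace (B₀ * B₀)
      = (3 / 32) * Matrix.trace (1 : Matrix (Fin N) (Fin N) ℂ)
        * ∑ i : Fin n, ∑ j : Fin n, ∑ k : Fin n, ((T i j k : ℂ)) ^ 2 := by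
  have hS := trace_trivector_mul_self hγ (T := fun j k l => (T j k l : ℂ))
    (fun j k l => by exact_mod_cast hT1 j k l) (fun j k l => by exact_mod_cast hT2 j k l)
  simp only [trivector] at hS
  rw [hB, smul_mul_smul_comm, trace_smul, smul_eq_mul, hS]
  linear_combination (-(3 / 32) * trace (1 : Matrix (Fin N) (Fin N) ℂ)
    * ∑ i, ∑ j, ∑ k, (T i j k : ℂ) ^ 2) * Complex.I_mul_I

theorem stmt_14 (n N : ℕ) (hn : 0 < n) (hN : 0 < N)
    (γ : Fin n → Matrix (Fin N) (Fin N) ℂ)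
    (hγ : ∀ a b : Fin n, γ a * γ b + γ b * γ a
      = (2 * if a = b then (1:ℂ) else 0) • (1 : Matrix (Fin N) (Fin N) ℂ))
    (T : Fin n → Fin n → Fin n → ℝ)
    (hT1 : ∀ j k l : Fin n, T j k l = - T k j l)
    (hT2 : ∀ j k l : Fin n, T j k l = - T j l k)
    (B₀ : Matrix (Fin N) (Fin N) ℂ)
    (hB : B₀ = (-(Complex.I / 8)) •
      ∑ j : Fin n, ∑ k : Fin n, ∑ l : Fin n, ((T j k l : ℂ)) • (γ j * γ k * γ l)) :
    Matrix.trace (B₀ * B₀)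
      = (3 / 32) * Matrix.trace (1 : Matrix (Fin N) (Fin N) ℂ)
        * ∑ i : Fin n, ∑ j : Fin n, ∑ k : Fin n, ((T i j k : ℂ)) ^ 2 :=
  stmt_14_general n N γ hγ T hT1 hT2 B₀ hB
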